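/- arXiv:2509.01067 — 3 statements merged into one kernel-verified Lean document; each statement's English description precedes it below -/
import Mathlib

section
/- Let Ω ⊆ ℝ³ be open, let q : Ω → ℝ be twice continuously differentiable, let b : Ω → ℝ^{3×3} be continuously differentiable, let J : Ω → ℝ be continuously differentiable and nowhere zero, and define a : Ω → ℝ^{3×3} entrywise by a_{rk} = b_{rk}/J. Then for every x ∈ Ω and every i ∈ {1,2,3}: Σ_{j,k,ℓ,r} ε_{ijk} b_{ℓj}(x) ∂_ℓ( a_{rk} ∂_r q )(x) = Σ_{j,k,ℓ,r} ε_{ijk} b_{ℓj}(x) (∂_ℓ a_{rk})(x) (∂_r q)(x); in other words, in the variable curl of the variable pressure gradient all second-derivative terms of q cancel. -/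
open scoped BigOperators Topology

noncomputable section

/-- The Levi-Civita symbol on `{1,2,3}` (here indexed by `Fin 3`): the sign of the
permutation `(i,j,k)`, and `0` if two indices coincide. -/
def eps (i j k : Fin 3) : ℝ :=
  (((j : ℕ) : ℝ) - ((i : ℕ) : ℝ)) * (((k : ℕ) : ℝ) - ((j : ℕ) : ℝ)) *
    (((k : ℕ) : ℝ) - ((i : ℕ) : ℝ)) / 2

/-- The spatial partial derivative `∂_j f (x)` of a scalar function on `ℝ³`. -/
def pd (j : Fin 3) (f : (Fin 3 → ℝ) → ℝ) (x : Fin 3 → ℝ) : ℝ :=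
  fderiv ℝ f x (Pi.single j 1)

/-- Algebraic cancellation: contracting `ε_{ijk} B_{ℓj} B_{rk}` against a symmetric `H_{ℓr}`
gives zero. -/
lemma eps_contract_symm_eq_zero (i : Fin 3) (B : Fin 3 → Fin 3 → ℝ) (H : Fin 3 → Fin 3 → ℝ)
    (hH : ∀ ℓ r, H ℓ r = H r ℓ) :
    ∑ j, ∑ k, ∑ ℓ, ∑ r, eps i j k * B ℓ j * (B r k * H ℓ r) = 0 := by
  fin_cases i <;>
  · simp only [Fin.sum_univ_three, eps]
    norm_num
    rw [hH 1 0, hH 2 0, hH 2 1]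
    ring

/-- In the variable curl of the variable pressure gradient all
second-derivative terms of `q` cancel:
`Σ_{j,k,ℓ,r} ε_{ijk} b_{ℓj} ∂_ℓ(a_{rk} ∂_r q) = Σ_{j,k,ℓ,r} ε_{ijk} b_{ℓj} (∂_ℓ a_{rk}) (∂_r q)`,
where `a = J⁻¹ b` entrywise, `J` nowhere zero. -/
theorem stmt1 (Ω : Set (Fin 3 → ℝ)) (hΩ : IsOpen Ω)
    (q : (Fin 3 → ℝ) → ℝ)
    (b a : (Fin 3 → ℝ) → Fin 3 → Fin 3 → ℝ)
    (J : (Fin 3 → ℝ) → ℝ)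
    (hq : ContDiffOn ℝ 2 q Ω)
    (hb : ∀ r k : Fin 3, ContDiffOn ℝ 1 (fun x => b x r k) Ω)
    (hJc : ContDiffOn ℝ 1 J Ω)
    (hJ0 : ∀ x ∈ Ω, J x ≠ 0)
    (ha : ∀ x ∈ Ω, ∀ r k : Fin 3, a x r k = b x r k / J x) :
    ∀ x ∈ Ω, ∀ i : Fin 3,
      (∑ j, ∑ k, ∑ ℓ, ∑ r,
        eps i j k * b x ℓ j * pd ℓ (fun y => a y r k * pd r q y) x)
      = ∑ j, ∑ k, ∑ ℓ, ∑ r,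
        eps i j k * b x ℓ j * pd ℓ (fun y => a y r k) x * pd r q x := by
  intro x hx i
  have hmem : Ω ∈ 𝓝 x := hΩ.mem_nhds hx
  have hq2 : ContDiffAt ℝ 2 q x := (hq x hx).contDiffAt hmem
  -- q is differentiable near x
  have hfd : ∀ᶠ y in 𝓝 x, HasFDerivAt q (fderiv ℝ q y) y := by
    filter_upwards [hmem] with y hy
    exact (((hq y hy).contDiffAt (hΩ.mem_nhds hy)).differentiableAt
      (by norm_num)).hasFDerivAt
  have hfdiff : DifferentiableAt ℝ (fderiv ℝ q) x :=
    (hq2.fderiv_right (m := 1) (by norm_num)).differentiableAt one_ne_zero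
  set f'' := fderiv ℝ (fderiv ℝ q) x with hf''
  have hsymm : ∀ v w, f'' v w = f'' w v :=
    second_derivative_symmetric_of_eventually hfd hfdiff.hasFDerivAt
  -- derivative of the partial derivatives of q
  have hpdr : ∀ r : Fin 3, HasFDerivAt (fun y => pd r q y)
      (((fderiv ℝ q x).comp (0 : (Fin 3 → ℝ) →L[ℝ] (Fin 3 → ℝ))) +
        f''.flip (Pi.single r 1)) x := by
    intro r
    simpa [pd] using hfdiff.hasFDerivAt.clm_apply
      (hasFDerivAt_const (Pi.single r (1 : ℝ)) x)
  have hHess : ∀ ℓ r : Fin 3, pd ℓ (fun y => pd r q y) x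
      = f'' (Pi.single ℓ 1) (Pi.single r 1) := by
    intro ℓ r
    have h := (hpdr r).fderiv
    simp only [pd] at h ⊢
    rw [h]
    simp
  -- differentiability of a-entries
  have hbd : ∀ r k : Fin 3, DifferentiableAt ℝ (fun y => b y r k) x := fun r k =>
    (((hb r k) x hx).contDiffAt hmem).differentiableAt one_ne_zero
  have hJd : DifferentiableAt ℝ J x := ((hJc x hx).contDiffAt hmem).differentiableAt one_ne_zero
  have haeq : ∀ r k : Fin 3, (fun y => a y r k) =ᶠ[𝓝 x] fun y => b y r k * (J y)⁻¹ := by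
    intro r k
    filter_upwards [hmem] with y hy
    rw [ha y hy r k, div_eq_mul_inv]
  have had : ∀ r k : Fin 3, DifferentiableAt ℝ (fun y => a y r k) x := by
    intro r k
    exact ((hbd r k).mul (hJd.inv (hJ0 x hx))).congr_of_eventuallyEq (haeq r k)
  -- product rule
  have hprod : ∀ r k ℓ : Fin 3, pd ℓ (fun y => a y r k * pd r q y) x
      = a x r k * pd ℓ (fun y => pd r q y) x + pd r q x * pd ℓ (fun y => a y r k) x := by
    intro r k ℓ
    have h := fderiv_fun_mul (had r k) (hpdr r).differentiableAt
    simp only [pd] at h ⊢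
    rw [h]
    simp
  -- split every summand
  have hterm : ∀ j k ℓ r : Fin 3,
      eps i j k * b x ℓ j * pd ℓ (fun y => a y r k * pd r q y) x
      = eps i j k * b x ℓ j *
          (b x r k * (f'' (Pi.single ℓ 1) (Pi.single r 1) / J x))
        + eps i j k * b x ℓ j * pd ℓ (fun y => a y r k) x * pd r q x := by
    intro j k ℓ r
    rw [hprod r k ℓ, hHess ℓ r, ha x hx r k]
    ring
  simp only [hterm, Finset.sum_add_distrib]
  have hHsymm : ∀ ℓ r : Fin 3,
      f'' (Pi.single ℓ 1) (Pi.single r 1) / J x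
        = f'' (Pi.single r 1) (Pi.single ℓ 1) / J x := fun ℓ r => by rw [hsymm]
  rw [eps_contract_symm_eq_zero i (b x)
    (fun ℓ r => f'' (Pi.single ℓ 1) (Pi.single r 1) / J x) hHsymm]
  simp

end
end

section
/- Let Ω ⊆ ℝ³ be open, let b : Ω → ℝ^{3×3} and v : Ω → ℝ³ be twice continuously differentiable, and assume the Piola identity Σ_m ∂_m b_{mk} = 0 on Ω for each k. Then for each j ∈ {1,2,3}, on Ω: Σ_{k,ℓ,m} b_{mk} ∂_m( b_{ℓj} ∂_ℓ v_k ) = Σ_{k,ℓ,m} b_{ℓj} ∂_ℓ( b_{mk} ∂_m v_k ) + Σ_{k,ℓ,m} ∂_ℓ( b_{mk} (∂_m b_{ℓj}) v_k ) − Σ_{k,ℓ,m} (∂_ℓ b_{mk}) ∂_m( b_{ℓj} v_k ). -/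
open scoped BigOperators

noncomputable section

private lemma cd2_diffAt {Ω : Set (Fin 3 → ℝ)} (hΩ : IsOpen Ω) {f : (Fin 3 → ℝ) → ℝ}
    (hf : ContDiffOn ℝ 2 f Ω) {x : Fin 3 → ℝ} (hx : x ∈ Ω) : DifferentiableAt ℝ f x :=
  (hf.contDiffAt (hΩ.mem_nhds hx)).differentiableAt two_ne_zero

private lemma pd_contDiffOn {Ω : Set (Fin 3 → ℝ)} (hΩ : IsOpen Ω) {f : (Fin 3 → ℝ) → ℝ}
    (hf : ContDiffOn ℝ 2 f Ω) (ℓ : Fin 3) : ContDiffOn ℝ 1 (fun y => pd ℓ f y) Ω := by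
  have h := hf.fderiv_of_isOpen hΩ (m := 1) (by norm_num)
  exact h.clm_apply contDiffOn_const

private lemma pd_diffAt {Ω : Set (Fin 3 → ℝ)} (hΩ : IsOpen Ω) {f : (Fin 3 → ℝ) → ℝ}
    (hf : ContDiffOn ℝ 2 f Ω) {x : Fin 3 → ℝ} (hx : x ∈ Ω) (ℓ : Fin 3) :
    DifferentiableAt ℝ (fun y => pd ℓ f y) x :=
  ((pd_contDiffOn hΩ hf ℓ).contDiffAt (hΩ.mem_nhds hx)).differentiableAt one_ne_zero

private lemma pd_mul {f g : (Fin 3 → ℝ) → ℝ} {x : Fin 3 → ℝ}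
    (hf : DifferentiableAt ℝ f x) (hg : DifferentiableAt ℝ g x) (j : Fin 3) :
    pd j (fun y => f y * g y) x = pd j f x * g x + f x * pd j g x := by
  simp only [pd, fderiv_fun_mul hf hg]
  simp
  ring

private lemma pd_comm {Ω : Set (Fin 3 → ℝ)} (hΩ : IsOpen Ω) {f : (Fin 3 → ℝ) → ℝ}
    (hf : ContDiffOn ℝ 2 f Ω) {x : Fin 3 → ℝ} (hx : x ∈ Ω) (ℓ m : Fin 3) :
    pd m (fun y => pd ℓ f y) x = pd ℓ (fun y => pd m f y) x := by
  have hsymm := (hf.contDiffAt (hΩ.mem_nhds hx)).isSymmSndFDerivAt (by simp)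
  have hdf : DifferentiableAt ℝ (fderiv ℝ f) x :=
    (((hf.fderiv_of_isOpen hΩ (m := 1) (by norm_num)).contDiffAt
      (hΩ.mem_nhds hx))).differentiableAt one_ne_zero
  have key : ∀ a c : Fin 3, pd a (fun y => pd c f y) x
      = fderiv ℝ (fderiv ℝ f) x (Pi.single a 1) (Pi.single c 1) := by
    intro a c
    simp only [pd]
    rw [fderiv_clm_apply hdf (differentiableAt_const _)]
    simp
  rw [key, key, hsymm]
private lemma piola_dd {Ω : Set (Fin 3 → ℝ)} (hΩ : IsOpen Ω)
    {b : (Fin 3 → ℝ) → Fin 3 → Fin 3 → ℝ}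
    (hb : ∀ m k : Fin 3, ContDiffOn ℝ 2 (fun x => b x m k) Ω)
    (hPiola : ∀ x ∈ Ω, ∀ k : Fin 3, (∑ m, pd m (fun y => b y m k) x) = 0)
    (j : Fin 3) {x : Fin 3 → ℝ} (hx : x ∈ Ω) (m : Fin 3) :
    (∑ ℓ, pd m (fun y => pd ℓ (fun z => b z ℓ j) y) x) = 0 := by
  have hdiff : ∀ ℓ : Fin 3, DifferentiableAt ℝ (fun y => pd ℓ (fun z => b z ℓ j) y) x :=
    fun ℓ => pd_diffAt hΩ (hb ℓ j) hx ℓ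
  have hsum : fderiv ℝ (fun y => ∑ ℓ, pd ℓ (fun z => b z ℓ j) y) x
      = ∑ ℓ, fderiv ℝ (fun y => pd ℓ (fun z => b z ℓ j) y) x :=
    fderiv_fun_sum fun ℓ _ => hdiff ℓ
  have hev : (fun y => ∑ ℓ, pd ℓ (fun z => b z ℓ j) y) =ᶠ[nhds x] fun _ => (0:ℝ) := by
    filter_upwards [hΩ.mem_nhds hx] with y hy
    exact hPiola y hy j
  have hz : fderiv ℝ (fun y => ∑ ℓ, pd ℓ (fun z => b z ℓ j) y) x = 0 := by
    rw [hev.fderiv_eq]; exact fderiv_const_apply 0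
  calc (∑ ℓ, pd m (fun y => pd ℓ (fun z => b z ℓ j) y) x)
      = (fderiv ℝ (fun y => ∑ ℓ, pd ℓ (fun z => b z ℓ j) y) x) (Pi.single m 1) := by
        rw [hsum]; simp [pd]
    _ = 0 := by rw [hz]; rfl

/-- Under the Piola identity `Σ_m ∂_m b_{mk} = 0`, the commutation identity
`Σ_{k,ℓ,m} b_{mk} ∂_m( b_{ℓj} ∂_ℓ v_k ) = Σ_{k,ℓ,m} b_{ℓj} ∂_ℓ( b_{mk} ∂_m v_k )
  + Σ_{k,ℓ,m} ∂_ℓ( b_{mk} (∂_m b_{ℓj}) v_k ) − Σ_{k,ℓ,m} (∂_ℓ b_{mk}) ∂_m( b_{ℓj} v_k )`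
holds on `Ω` for each `j`. -/
theorem stmt7 (Ω : Set (Fin 3 → ℝ)) (hΩ : IsOpen Ω)
    (b : (Fin 3 → ℝ) → Fin 3 → Fin 3 → ℝ)
    (v : (Fin 3 → ℝ) → Fin 3 → ℝ)
    (hb : ∀ m k : Fin 3, ContDiffOn ℝ 2 (fun x => b x m k) Ω)
    (hv : ∀ k : Fin 3, ContDiffOn ℝ 2 (fun x => v x k) Ω)
    (hPiola : ∀ x ∈ Ω, ∀ k : Fin 3, (∑ m, pd m (fun y => b y m k) x) = 0) :
    ∀ j : Fin 3, ∀ x ∈ Ω,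
      (∑ k, ∑ ℓ, ∑ m, b x m k * pd m (fun y => b y ℓ j * pd ℓ (fun z => v z k) y) x)
      = (∑ k, ∑ ℓ, ∑ m, b x ℓ j * pd ℓ (fun y => b y m k * pd m (fun z => v z k) y) x)
        + (∑ k, ∑ ℓ, ∑ m,
            pd ℓ (fun y => b y m k * pd m (fun z => b z ℓ j) y * v y k) x)
        - ∑ k, ∑ ℓ, ∑ m,
            pd ℓ (fun y => b y m k) x * pd m (fun y => b y ℓ j * v y k) x := by
  intro j x hx
  have hbD : ∀ m k : Fin 3, DifferentiableAt ℝ (fun y => b y m k) x :=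
    fun m k => cd2_diffAt hΩ (hb m k) hx
  have hvD : ∀ k : Fin 3, DifferentiableAt ℝ (fun y => v y k) x :=
    fun k => cd2_diffAt hΩ (hv k) hx
  have hpbD : ∀ ℓ m k : Fin 3, DifferentiableAt ℝ (fun y => pd ℓ (fun z => b z m k) y) x :=
    fun ℓ m k => pd_diffAt hΩ (hb m k) hx ℓ
  have hpvD : ∀ ℓ k : Fin 3, DifferentiableAt ℝ (fun y => pd ℓ (fun z => v z k) y) x :=
    fun ℓ k => pd_diffAt hΩ (hv k) hx ℓ
  have e1 : ∀ k ℓ m : Fin 3,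
      b x m k * pd m (fun y => b y ℓ j * pd ℓ (fun z => v z k) y) x
      = b x m k * pd m (fun z => b z ℓ j) x * pd ℓ (fun z => v z k) x
        + b x m k * b x ℓ j * pd ℓ (fun y => pd m (fun z => v z k) y) x := by
    intro k ℓ m
    rw [pd_mul (hbD ℓ j) (hpvD ℓ k) m, pd_comm hΩ (hv k) hx ℓ m]
    ring
  have e2 : ∀ k ℓ m : Fin 3,
      b x ℓ j * pd ℓ (fun y => b y m k * pd m (fun z => v z k) y) x
      = b x ℓ j * pd ℓ (fun z => b z m k) x * pd m (fun z => v z k) x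
        + b x m k * b x ℓ j * pd ℓ (fun y => pd m (fun z => v z k) y) x := by
    intro k ℓ m
    rw [pd_mul (hbD m k) (hpvD m k) ℓ]
    ring
  have e3 : ∀ k ℓ m : Fin 3,
      pd ℓ (fun y => b y m k * pd m (fun z => b z ℓ j) y * v y k) x
      = pd ℓ (fun z => b z m k) x * pd m (fun z => b z ℓ j) x * v x k
        + b x m k * v x k * pd m (fun y => pd ℓ (fun z => b z ℓ j) y) x
        + b x m k * pd m (fun z => b z ℓ j) x * pd ℓ (fun z => v z k) x := by
    intro k ℓ m
    rw [pd_mul ((hbD m k).fun_mul (hpbD m ℓ j)) (hvD k) ℓ,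
      pd_mul (hbD m k) (hpbD m ℓ j) ℓ, pd_comm hΩ (hb ℓ j) hx m ℓ]
    ring
  have e4 : ∀ k ℓ m : Fin 3,
      pd ℓ (fun y => b y m k) x * pd m (fun y => b y ℓ j * v y k) x
      = pd ℓ (fun z => b z m k) x * pd m (fun z => b z ℓ j) x * v x k
        + b x ℓ j * pd ℓ (fun z => b z m k) x * pd m (fun z => v z k) x := by
    intro k ℓ m
    rw [pd_mul (hbD ℓ j) (hvD k) m]
    ring
  have hE0 : (∑ k, ∑ ℓ, ∑ m : Fin 3,
      b x m k * v x k * pd m (fun y => pd ℓ (fun z => b z ℓ j) y) x) = 0 := by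
    refine Finset.sum_eq_zero fun k _ => ?_
    rw [Finset.sum_comm]
    refine Finset.sum_eq_zero fun m _ => ?_
    rw [← Finset.mul_sum, piola_dd hΩ hb hPiola j hx m, mul_zero]
  simp only [e1, e2, e3, e4, Finset.sum_add_distrib]
  rw [hE0]
  ring

end
end

section
/- Let Ω ⊆ ℝ³ be open, let b : Ω → ℝ^{3×3} and v : Ω → ℝ³ be twice continuously differentiable, and assume the Piola identity Σ_m ∂_m b_{mk} = 0 on Ω for each k. Define φ_{kj} = Σ_ℓ ( b_{ℓj} ∂_ℓ v_k − b_{ℓk} ∂_ℓ v_j ) for k, j ∈ {1,2,3}. Then for each j ∈ {1,2,3}, on Ω: −Σ_{k,ℓ,m} ∂_m( b_{mk} b_{ℓk} ∂_ℓ v_j ) + Σ_{k,ℓ,m} ∂_ℓ( b_{mk} (∂_m b_{ℓj}) v_k ) − Σ_{k,ℓ,m} (∂_ℓ b_{mk}) ∂_m( b_{ℓj} v_k ) = Σ_{k,m} b_{mk} ∂_m φ_{kj} − Σ_{k,ℓ,m} b_{ℓj} ∂_ℓ( b_{mk} ∂_m v_k ). -/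
open scoped BigOperators

noncomputable section

namespace Stmt8Aux

variable {f g : (Fin 3 → ℝ) → ℝ} {x : Fin 3 → ℝ}

lemma pd_mul (j : Fin 3) (hf : DifferentiableAt ℝ f x) (hg : DifferentiableAt ℝ g x) :
    pd j (fun y => f y * g y) x = pd j f x * g x + f x * pd j g x := by
  unfold pd
  rw [fderiv_fun_mul hf hg]
  simp [mul_comm]
  ring

lemma pd_sub (j : Fin 3) (hf : DifferentiableAt ℝ f x) (hg : DifferentiableAt ℝ g x) :
    pd j (fun y => f y - g y) x = pd j f x - pd j g x := by
  unfold pd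
  rw [fderiv_fun_sub hf hg]
  simp

lemma pd_sum (j : Fin 3) (F : Fin 3 → (Fin 3 → ℝ) → ℝ)
    (hF : ∀ i, DifferentiableAt ℝ (F i) x) :
    pd j (fun y => ∑ i, F i y) x = ∑ i, pd j (F i) x := by
  unfold pd
  rw [fderiv_fun_sum (fun i _ => hF i)]
  simp

lemma contDiffAt_pd (hf : ContDiffAt ℝ 2 f x) (ℓ : Fin 3) :
    ContDiffAt ℝ 1 (fun y => pd ℓ f y) x := by
  have h := hf.fderiv_right (m := 1) (by norm_num)
  exact h.clm_apply contDiffAt_const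

lemma diff_pd (hf : ContDiffAt ℝ 2 f x) (ℓ : Fin 3) :
    DifferentiableAt ℝ (fun y => pd ℓ f y) x :=
  (contDiffAt_pd hf ℓ).differentiableAt (by norm_num)

lemma pd_pd (hf : ContDiffAt ℝ 2 f x) (m ℓ : Fin 3) :
    pd m (fun y => pd ℓ f y) x = fderiv ℝ (fderiv ℝ f) x (Pi.single m 1) (Pi.single ℓ 1) := by
  have h : DifferentiableAt ℝ (fderiv ℝ f) x :=
    (hf.fderiv_right (m := 1) (by norm_num)).differentiableAt (by norm_num)
  have : pd m (fun y => pd ℓ f y) x =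
      fderiv ℝ ((ContinuousLinearMap.apply ℝ ℝ (Pi.single ℓ 1)) ∘ (fderiv ℝ f)) x
        (Pi.single m 1) := rfl
  rw [this, fderiv_comp x ((ContinuousLinearMap.apply ℝ ℝ (Pi.single ℓ 1)).differentiableAt) h]
  simp

lemma pd_symm (hf : ContDiffAt ℝ 2 f x) (m ℓ : Fin 3) :
    pd m (fun y => pd ℓ f y) x = pd ℓ (fun y => pd m f y) x := by
  rw [pd_pd hf m ℓ, pd_pd hf ℓ m]
  exact hf.isSymmSndFDerivAt (by norm_num) _ _

lemma pd_congr (j : Fin 3) (h : f =ᶠ[nhds x] g) : pd j f x = pd j g x := by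
  unfold pd
  rw [h.fderiv_eq]

end Stmt8Aux

/-- The core identity of the variable div–curl lemma: with
`φ_{kj} = Σ_ℓ ( b_{ℓj} ∂_ℓ v_k − b_{ℓk} ∂_ℓ v_j )` and the Piola identity, for each `j`,
`−Σ ∂_m( b_{mk} b_{ℓk} ∂_ℓ v_j ) + Σ ∂_ℓ( b_{mk} (∂_m b_{ℓj}) v_k ) − Σ (∂_ℓ b_{mk}) ∂_m( b_{ℓj} v_k )
 = Σ b_{mk} ∂_m φ_{kj} − Σ b_{ℓj} ∂_ℓ( b_{mk} ∂_m v_k )` on `Ω`. -/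
theorem stmt8 (Ω : Set (Fin 3 → ℝ)) (hΩ : IsOpen Ω)
    (b : (Fin 3 → ℝ) → Fin 3 → Fin 3 → ℝ)
    (v : (Fin 3 → ℝ) → Fin 3 → ℝ)
    (hb : ∀ m k : Fin 3, ContDiffOn ℝ 2 (fun x => b x m k) Ω)
    (hv : ∀ k : Fin 3, ContDiffOn ℝ 2 (fun x => v x k) Ω)
    (hPiola : ∀ x ∈ Ω, ∀ k : Fin 3, (∑ m, pd m (fun y => b y m k) x) = 0)
    (φ : (Fin 3 → ℝ) → Fin 3 → Fin 3 → ℝ)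
    (hφ : ∀ x k j, φ x k j =
      ∑ ℓ, (b x ℓ j * pd ℓ (fun y => v y k) x - b x ℓ k * pd ℓ (fun y => v y j) x)) :
    ∀ j : Fin 3, ∀ x ∈ Ω,
      (-(∑ k, ∑ ℓ, ∑ m, pd m (fun y => b y m k * b y ℓ k * pd ℓ (fun z => v z j) y) x)
        + (∑ k, ∑ ℓ, ∑ m,
            pd ℓ (fun y => b y m k * pd m (fun z => b z ℓ j) y * v y k) x)
        - ∑ k, ∑ ℓ, ∑ m,
            pd ℓ (fun y => b y m k) x * pd m (fun y => b y ℓ j * v y k) x)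
      = (∑ k, ∑ m, b x m k * pd m (fun y => φ y k j) x)
        - ∑ k, ∑ ℓ, ∑ m, b x ℓ j * pd ℓ (fun y => b y m k * pd m (fun z => v z k) y) x := by
  intro j x hx
  have hmem : Ω ∈ nhds x := hΩ.mem_nhds hx
  have hbA : ∀ m k : Fin 3, ContDiffAt ℝ 2 (fun y => b y m k) x :=
    fun m k => (hb m k).contDiffAt hmem
  have hvA : ∀ k : Fin 3, ContDiffAt ℝ 2 (fun y => v y k) x :=
    fun k => (hv k).contDiffAt hmem
  have hbd : ∀ m k, DifferentiableAt ℝ (fun y => b y m k) x :=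
    fun m k => (hbA m k).differentiableAt (by norm_num)
  have hvd : ∀ k, DifferentiableAt ℝ (fun y => v y k) x :=
    fun k => (hvA k).differentiableAt (by norm_num)
  have hdvd : ∀ ℓ k, DifferentiableAt ℝ (fun y => pd ℓ (fun z => v z k) y) x :=
    fun ℓ k => Stmt8Aux.diff_pd (hvA k) ℓ
  have hdbd : ∀ ℓ m k, DifferentiableAt ℝ (fun y => pd ℓ (fun z => b z m k) y) x :=
    fun ℓ m k => Stmt8Aux.diff_pd (hbA m k) ℓ
  -- expansion of the four kinds of derivatives of products
  have e1 : ∀ k ℓ m : Fin 3,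
      pd m (fun y => b y m k * b y ℓ k * pd ℓ (fun z => v z j) y) x
      = (pd m (fun y => b y m k) x * b x ℓ k + b x m k * pd m (fun y => b y ℓ k) x)
            * pd ℓ (fun z => v z j) x
        + b x m k * b x ℓ k * pd m (fun y => pd ℓ (fun z => v z j) y) x := by
    intro k ℓ m
    rw [Stmt8Aux.pd_mul (f := fun y => b y m k * b y ℓ k)
          (g := fun y => pd ℓ (fun z => v z j) y) m ((hbd m k).mul (hbd ℓ k)) (hdvd ℓ j),
        Stmt8Aux.pd_mul (f := fun y => b y m k) (g := fun y => b y ℓ k) m (hbd m k) (hbd ℓ k)]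
  have e2 : ∀ k ℓ m : Fin 3,
      pd ℓ (fun y => b y m k * pd m (fun z => b z ℓ j) y * v y k) x
      = (pd ℓ (fun y => b y m k) x * pd m (fun z => b z ℓ j) x
            + b x m k * pd ℓ (fun y => pd m (fun z => b z ℓ j) y) x) * v x k
        + b x m k * pd m (fun z => b z ℓ j) x * pd ℓ (fun y => v y k) x := by
    intro k ℓ m
    rw [Stmt8Aux.pd_mul (f := fun y => b y m k * pd m (fun z => b z ℓ j) y)
          (g := fun y => v y k) ℓ ((hbd m k).mul (hdbd m ℓ j)) (hvd k),
        Stmt8Aux.pd_mul (f := fun y => b y m k) (g := fun y => pd m (fun z => b z ℓ j) y) ℓ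
          (hbd m k) (hdbd m ℓ j)]
  have e3 : ∀ k ℓ m : Fin 3,
      pd m (fun y => b y ℓ j * v y k) x
      = pd m (fun y => b y ℓ j) x * v x k + b x ℓ j * pd m (fun y => v y k) x := by
    intro k ℓ m
    rw [Stmt8Aux.pd_mul (f := fun y => b y ℓ j) (g := fun y => v y k) m (hbd ℓ j) (hvd k)]
  have e5 : ∀ k ℓ m : Fin 3,
      pd ℓ (fun y => b y m k * pd m (fun z => v z k) y) x
      = pd ℓ (fun y => b y m k) x * pd m (fun z => v z k) x
        + b x m k * pd ℓ (fun y => pd m (fun z => v z k) y) x := by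
    intro k ℓ m
    rw [Stmt8Aux.pd_mul (f := fun y => b y m k) (g := fun y => pd m (fun z => v z k) y) ℓ
          (hbd m k) (hdvd m k)]
  have e4 : ∀ k m : Fin 3,
      pd m (fun y => φ y k j) x
      = ∑ ℓ, (pd m (fun y => b y ℓ j) x * pd ℓ (fun z => v z k) x
                + b x ℓ j * pd m (fun y => pd ℓ (fun z => v z k) y) x
              - (pd m (fun y => b y ℓ k) x * pd ℓ (fun z => v z j) x
                + b x ℓ k * pd m (fun y => pd ℓ (fun z => v z j) y) x)) := by
    intro k m
    have hfn : (fun y => φ y k j)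
        = fun y => ∑ ℓ, (b y ℓ j * pd ℓ (fun z => v z k) y - b y ℓ k * pd ℓ (fun z => v z j) y) :=
      funext fun y => hφ y k j
    rw [hfn]
    rw [Stmt8Aux.pd_sum m
        (fun ℓ y => b y ℓ j * pd ℓ (fun z => v z k) y - b y ℓ k * pd ℓ (fun z => v z j) y)
        (fun ℓ => ((hbd ℓ j).mul (hdvd ℓ k)).sub ((hbd ℓ k).mul (hdvd ℓ j)))]
    refine Finset.sum_congr rfl fun ℓ _ => ?_
    rw [Stmt8Aux.pd_sub (f := fun y => b y ℓ j * pd ℓ (fun z => v z k) y)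
          (g := fun y => b y ℓ k * pd ℓ (fun z => v z j) y) m ((hbd ℓ j).mul (hdvd ℓ k)) ((hbd ℓ k).mul (hdvd ℓ j)),
        Stmt8Aux.pd_mul (f := fun y => b y ℓ j) (g := fun y => pd ℓ (fun z => v z k) y) m
          (hbd ℓ j) (hdvd ℓ k),
        Stmt8Aux.pd_mul (f := fun y => b y ℓ k) (g := fun y => pd ℓ (fun z => v z j) y) m
          (hbd ℓ k) (hdvd ℓ j)]
  -- Piola identity in solved form
  have hP : ∀ k : Fin 3, pd 2 (fun y => b y 2 k) x
      = -(pd 0 (fun y => b y 0 k) x + pd 1 (fun y => b y 1 k) x) := by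
    intro k
    have h := hPiola x hx k
    rw [Fin.sum_univ_three] at h
    linarith
  -- differentiated Piola identity in solved form
  have hdP : ∀ m : Fin 3, pd 2 (fun y => pd m (fun z => b z 2 j) y) x
      = -(pd 0 (fun y => pd m (fun z => b z 0 j) y) x
          + pd 1 (fun y => pd m (fun z => b z 1 j) y) x) := by
    intro m
    have hfun : (fun y => ∑ ℓ, pd ℓ (fun z => b z ℓ j) y) =ᶠ[nhds x] (fun _ => (0:ℝ)) := by
      filter_upwards [hmem] with y hy
      exact hPiola y hy j
    have h0 : pd m (fun y => ∑ ℓ, pd ℓ (fun z => b z ℓ j) y) x = 0 := by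
      rw [Stmt8Aux.pd_congr m hfun]
      unfold pd
      simp
    rw [Stmt8Aux.pd_sum m (fun ℓ y => pd ℓ (fun z => b z ℓ j) y)
        (fun ℓ => hdbd ℓ ℓ j)] at h0
    have hsw : ∀ ℓ : Fin 3, pd m (fun y => pd ℓ (fun z => b z ℓ j) y) x
        = pd ℓ (fun y => pd m (fun z => b z ℓ j) y) x :=
      fun ℓ => Stmt8Aux.pd_symm (hbA ℓ j) m ℓ
    rw [Fin.sum_univ_three, hsw 0, hsw 1, hsw 2] at h0
    linarith
  -- symmetry of second derivatives of v
  have hs10 : ∀ k : Fin 3, pd 1 (fun y => pd 0 (fun z => v z k) y) x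
      = pd 0 (fun y => pd 1 (fun z => v z k) y) x := fun k => Stmt8Aux.pd_symm (hvA k) 1 0
  have hs20 : ∀ k : Fin 3, pd 2 (fun y => pd 0 (fun z => v z k) y) x
      = pd 0 (fun y => pd 2 (fun z => v z k) y) x := fun k => Stmt8Aux.pd_symm (hvA k) 2 0
  have hs21 : ∀ k : Fin 3, pd 2 (fun y => pd 1 (fun z => v z k) y) x
      = pd 1 (fun y => pd 2 (fun z => v z k) y) x := fun k => Stmt8Aux.pd_symm (hvA k) 2 1
  simp only [e1, e2, e3, e4, e5]
  simp only [Fin.sum_univ_three]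
  simp only [hP, hdP, hs10, hs20, hs21]
  ring

end
end
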